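/- Let λ > 0 and m ∈ (-1,1). The function g(w) = (1+w)^{-1 + (1+m)/λ} (1-w)^{-1 + (1-m)/λ} is differentiable on (-1,1) and satisfies on (-1,1) the stationary Fokker-Planck equation (λ/2) d/dw [ (1-w²) g(w) ] + (w - m) g(w) = 0. -/

import Mathlib

open Set

/-! The candidate `g` is the Jacobi-type weight `(1+w)^(a-1) (1-w)^(b-1)` with `a = (1+m)/λ`,
`b = (1-m)/λ`, so `(1-w²) g = (1+w)^a (1-w)^b`. Differentiating the latter gives
`(a(1-w) - b(1+w)) g = (2/λ)(m - w) g`. -/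

section JacobiWeight

variable {a b w : ℝ}

theorem hasDerivAt_one_add_rpow_mul_one_sub_rpow (hw : w ∈ Ioo (-1 : ℝ) 1) :
    HasDerivAt (fun x : ℝ => (1 + x) ^ a * (1 - x) ^ b)
      ((a * (1 - w) - b * (1 + w)) * ((1 + w) ^ (a - 1) * (1 - w) ^ (b - 1))) w := by
  have h₁ : 1 + w ≠ 0 := by linarith [hw.1]
  have h₂ : 1 - w ≠ 0 := by linarith [hw.2]
  have hplus : HasDerivAt (fun x : ℝ => (1 + x) ^ a) (a * (1 + w) ^ (a - 1)) w := by
    simpa using ((hasDerivAt_id w).const_add 1).rpow_const (p := a) (Or.inl h₁)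
  have hminus : HasDerivAt (fun x : ℝ => (1 - x) ^ b) (-(b * (1 - w) ^ (b - 1))) w := by
    simpa using ((hasDerivAt_id w).const_sub 1).rpow_const (p := b) (Or.inl h₂)
  refine (hplus.mul hminus).congr_deriv ?_
  rw [Real.rpow_sub_one h₁, Real.rpow_sub_one h₂]
  field_simp
  ring

theorem one_sub_sq_mul_rpow_sub_one_mul_rpow_sub_one (hw : w ∈ Ioo (-1 : ℝ) 1) :
    (1 - w ^ 2) * ((1 + w) ^ (a - 1) * (1 - w) ^ (b - 1)) = (1 + w) ^ a * (1 - w) ^ b := by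
  have h₁ : 1 + w ≠ 0 := by linarith [hw.1]
  have h₂ : 1 - w ≠ 0 := by linarith [hw.2]
  rw [Real.rpow_sub_one h₁, Real.rpow_sub_one h₂]
  field_simp
  ring

end JacobiWeight

theorem stationary_solution_sqrt_diffusion_general
    (l m : ℝ) (hl : 0 < l)
    (g : ℝ → ℝ)
    (hg : ∀ w, g w =
      (1 + w) ^ (-1 + (1 + m)/l) * (1 - w) ^ (-1 + (1 - m)/l)) :
    DifferentiableOn ℝ g (Ioo (-1:ℝ) 1) ∧
      ∀ w ∈ Ioo (-1:ℝ) 1,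
        HasDerivAt (fun w => (l/2) * ((1 - w^2) * g w)) (-((w - m) * g w)) w := by
  have hg' : g = fun w => (1 + w) ^ ((1 + m) / l - 1) * (1 - w) ^ ((1 - m) / l - 1) := by
    funext w
    rw [hg, neg_add_eq_sub, neg_add_eq_sub]
  subst hg'
  refine ⟨fun w hw => (hasDerivAt_one_add_rpow_mul_one_sub_rpow hw).differentiableAt
    |>.differentiableWithinAt, fun w hw => ?_⟩
  have hweight : (fun x => (l / 2) * ((1 + x) ^ ((1 + m) / l) * (1 - x) ^ ((1 - m) / l)))
      =ᶠ[nhds w] fun x => (l / 2) * ((1 - x ^ 2) *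
        ((1 + x) ^ ((1 + m) / l - 1) * (1 - x) ^ ((1 - m) / l - 1))) := by
    filter_upwards [isOpen_Ioo.mem_nhds hw] with x hx
    rw [one_sub_sq_mul_rpow_sub_one_mul_rpow_sub_one hx]
  refine (((hasDerivAt_one_add_rpow_mul_one_sub_rpow hw).const_mul (l / 2)).congr_of_eventuallyEq
    hweight.symm).congr_deriv ?_
  field_simp
  ring

/-- The stationary solution for `D(|w|) = √(1-w²)`: the explicit density `g`
is differentiable on `(-1,1)` and solves
`(λ/2) d/dw[(1-w²) g] + (w-m) g = 0` there. -/
theorem stationary_solution_sqrt_diffusion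
    (l m : ℝ) (hl : 0 < l) (hm : m ∈ Ioo (-1:ℝ) 1)
    (g : ℝ → ℝ)
    (hg : ∀ w, g w =
      (1 + w) ^ (-1 + (1 + m)/l) * (1 - w) ^ (-1 + (1 - m)/l)) :
    DifferentiableOn ℝ g (Ioo (-1:ℝ) 1) ∧
      ∀ w ∈ Ioo (-1:ℝ) 1,
        HasDerivAt (fun w => (l/2) * ((1 - w^2) * g w)) (-((w - m) * g w)) w :=
  stationary_solution_sqrt_diffusion_general l m hl g hg
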